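/- The function ζ ↦ L(ζ,−1) is strictly increasing on the interval [−1.5, −1.25] (i.e., ∂L(ζ,−1)/∂ζ > 0 there), and its maximal value satisfies L(−1.25, −1) < 0; consequently max_{ζ ∈ [−1.5,−1.25]} L(ζ,−1) < 0. -/

import Mathlib

open Real Set

/-- The auxiliary function `L(ζ, s)` from Lemma 2.4 of the paper. -/
noncomputable def Lfun (ζ s : ℝ) : ℝ :=
  s - ζ - Real.log (1 + s - ζ) +
    2 * (ζ + 1 / 2) ^ 2 * (s - ζ) ^ 2 /
      ((2 * ζ + 1) * ζ ^ 2 + (2 / 3) * ζ * (s - ζ))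

/-!
The denominator of `L(ζ, -1)` factors as `ζ (3ζ + 2)(2ζ - 1) / 3`, which gives a closed form of
`ζ ↦ L(ζ, -1)` whose derivative is
`-(36ζ² + 16ζ - 3)(ζ + 1)³ / (ζ² (3ζ + 2)² (2ζ - 1)²)`. For `ζ < -1` the quadratic factor is
positive and `(ζ + 1)³` is negative, so `L(·, -1)` is strictly increasing on `(-∞, -1]`. Its value
at `-5/4` is `109/490 - log (5/4)`, which is negative because the Taylor bound of order four gives
`exp (109/490) < 5/4`.
-/

lemma Lfun_neg_one_eq :
    (fun ζ => Lfun ζ (-1)) = fun ζ =>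
      -1 - ζ - log (-ζ) + 6 * (ζ + 1 / 2) ^ 2 * (ζ + 1) ^ 2 / (ζ * (3 * ζ + 2) * (2 * ζ - 1)) := by
  funext ζ
  have hden : (2 * ζ + 1) * ζ ^ 2 + 2 / 3 * ζ * (-1 - ζ) = ζ * (3 * ζ + 2) * (2 * ζ - 1) / 3 := by
    ring
  rw [Lfun, hden, div_div_eq_mul_div]
  ring_nf

lemma hasDerivAt_Lfun_neg_one {ζ : ℝ} (h₀ : ζ ≠ 0) (h₁ : 3 * ζ + 2 ≠ 0) (h₂ : 2 * ζ - 1 ≠ 0) :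
    HasDerivAt (fun ζ => Lfun ζ (-1))
      (-(36 * ζ ^ 2 + 16 * ζ - 3) * (ζ + 1) ^ 3 /
        (ζ ^ 2 * (3 * ζ + 2) ^ 2 * (2 * ζ - 1) ^ 2)) ζ := by
  have hx := hasDerivAt_id' ζ
  have hlog : HasDerivAt (fun x => log (-x)) ζ⁻¹ ζ :=
    (hx.fun_neg.log (neg_ne_zero.2 h₀)).congr_deriv (by field_simp)
  have hnum : HasDerivAt (fun x => 6 * (x + 1 / 2) ^ 2 * (x + 1) ^ 2)
      (12 * (ζ + 1 / 2) * (ζ + 1) * (2 * ζ + 3 / 2)) ζ :=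
    ((((hx.add_const (1 / 2)).fun_pow 2).const_mul 6).fun_mul
      ((hx.add_const 1).fun_pow 2)).congr_deriv (by push_cast; ring)
  have hden : HasDerivAt (fun x => x * (3 * x + 2) * (2 * x - 1)) (18 * ζ ^ 2 + 2 * ζ - 2) ζ :=
    ((hx.fun_mul ((hx.const_mul 3).add_const 2)).fun_mul
      ((hx.const_mul 2).sub_const 1)).congr_deriv (by ring)
  rw [Lfun_neg_one_eq]
  refine ((hx.const_sub (-1)).sub hlog |>.add (hnum.div hden (by positivity))).congr_deriv ?_
  -- `field_simp` looks for the side conditions in its own normal form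
  have h₁' : ζ * 3 + 2 ≠ 0 := by rwa [mul_comm]
  have h₂' : ζ * 2 - 1 ≠ 0 := by rwa [mul_comm]
  field_simp
  ring

lemma deriv_Lfun_neg_one_pos {ζ : ℝ} (hζ : ζ < -1) :
    0 < deriv (fun ζ => Lfun ζ (-1)) ζ := by
  rw [(hasDerivAt_Lfun_neg_one (by linarith) (by linarith) (by linarith)).deriv]
  have hquad : 0 < 36 * ζ ^ 2 + 16 * ζ - 3 := by nlinarith
  have hcube : 0 < (-(ζ + 1)) ^ 3 := pow_pos (by linarith) 3
  have hden : 0 < ζ ^ 2 * (3 * ζ + 2) ^ 2 * (2 * ζ - 1) ^ 2 := by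
    have : ζ ≠ 0 := by linarith
    have : 3 * ζ + 2 ≠ 0 := by linarith
    have : 2 * ζ - 1 ≠ 0 := by linarith
    positivity
  refine div_pos ?_ hden
  linear_combination mul_pos hquad hcube

lemma continuousOn_Lfun_neg_one : ContinuousOn (fun ζ => Lfun ζ (-1)) (Iic (-1)) := by
  intro ζ hζ
  rw [mem_Iic] at hζ
  exact (hasDerivAt_Lfun_neg_one (by linarith) (by linarith) (by linarith)).continuousAt
    |>.continuousWithinAt

lemma strictMonoOn_Lfun_neg_one : StrictMonoOn (fun ζ => Lfun ζ (-1)) (Iic (-1)) :=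
  strictMonoOn_of_deriv_pos (convex_Iic _) continuousOn_Lfun_neg_one fun ζ hζ =>
    deriv_Lfun_neg_one_pos (by rwa [interior_Iic] at hζ)

lemma Lfun_neg_five_fourths_neg_one : Lfun (-1.25) (-1) = 109 / 490 - log (5 / 4) := by
  norm_num [Lfun]
  ring

lemma lt_log_five_fourths : (109 : ℝ) / 490 < log (5 / 4) := by
  rw [lt_log_iff_exp_lt (by norm_num)]
  calc exp (109 / 490)
      ≤ ∑ m ∈ Finset.range 4, (109 / 490 : ℝ) ^ m / m.factorial +
          (109 / 490 : ℝ) ^ 4 * (4 + 1) / (Nat.factorial 4 * 4) :=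
        exp_bound' (by norm_num) (by norm_num) (by norm_num)
    _ < 5 / 4 := by norm_num [Finset.sum_range_succ, Nat.factorial]

/-- The map `ζ ↦ L(ζ, -1)` is strictly increasing on `[-1.5, -1.25]` (its
derivative is positive there), its maximal value `L(-1.25, -1)` is negative,
and consequently `L(ζ, -1) < 0` on the whole interval. -/
theorem Lfun_at_minus_one_increasing_and_negative :
    StrictMonoOn (fun ζ => Lfun ζ (-1)) (Set.Icc (-1.5 : ℝ) (-1.25)) ∧
    (∀ ζ ∈ Set.Icc (-1.5 : ℝ) (-1.25), 0 < deriv (fun ζ => Lfun ζ (-1)) ζ) ∧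
    Lfun (-1.25) (-1) < 0 ∧
    (∀ ζ ∈ Set.Icc (-1.5 : ℝ) (-1.25), Lfun ζ (-1) < 0) := by
  have hsub : Icc (-1.5 : ℝ) (-1.25) ⊆ Iic (-1) := fun ζ hζ => mem_Iic.2 (by linarith [hζ.2])
  have hmax : Lfun (-1.25) (-1) < 0 := by
    rw [Lfun_neg_five_fourths_neg_one]; linarith [lt_log_five_fourths]
  refine ⟨strictMonoOn_Lfun_neg_one.mono hsub,
    fun ζ hζ => deriv_Lfun_neg_one_pos (by linarith [hζ.2]), hmax, fun ζ hζ => ?_⟩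
  calc Lfun ζ (-1)
      ≤ Lfun (-1.25) (-1) :=
        strictMonoOn_Lfun_neg_one.monotoneOn (hsub hζ) (by norm_num) hζ.2
    _ < 0 := hmax
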